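/- Let ε, β > 0, let ζ(t,x), b(x), v̄(t,x) be smooth scalar functions (x ∈ ℝ) with h := 1 + εζ − βb > 0 satisfying ∂_t ζ + ∂_x(h v̄) = 0, and let v*(t,x,z) be smooth and satisfy, for all z in the water column, the transport equation ∂_t v* + ε v̄ ∂_x v* + ε v* ∂_x v̄ − ε ∂_x[(1+z−βb)v̄] ∂_z v* = 0. Then F(t,x) = ∫_{−1+βb}^{εζ} (v*)³ dz satisfies exactly ∂_t F + ε v̄ ∂_x F + 4ε F ∂_x v̄ = 0. -/

import Mathlib

noncomputable section

open intervalIntegral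

def Smooth1 (f : ℝ → ℝ) : Prop := ContDiff ℝ (⊤ : ℕ∞) f

def Smooth2 (f : ℝ → ℝ → ℝ) : Prop :=
  ContDiff ℝ (⊤ : ℕ∞) fun p : ℝ × ℝ => f p.1 p.2

def Smooth3 (f : ℝ → ℝ → ℝ → ℝ) : Prop :=
  ContDiff ℝ (⊤ : ℕ∞) fun p : ℝ × ℝ × ℝ => f p.1 p.2.1 p.2.2

noncomputable def rt (f : ℝ → ℝ → ℝ) (t x : ℝ) : ℝ := deriv (fun s => f s x) t
noncomputable def rx (f : ℝ → ℝ → ℝ) (t x : ℝ) : ℝ := deriv (fun u => f t u) x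
noncomputable def st (f : ℝ → ℝ → ℝ → ℝ) (t x z : ℝ) : ℝ := deriv (fun s => f s x z) t
noncomputable def sx (f : ℝ → ℝ → ℝ → ℝ) (t x z : ℝ) : ℝ := deriv (fun u => f t u z) x
noncomputable def sz (f : ℝ → ℝ → ℝ → ℝ) (t x z : ℝ) : ℝ := deriv (fun u => f t x u) z

/-- F = ∫ (v*)³. -/
noncomputable def Fn (ε β : ℝ) (ζ : ℝ → ℝ → ℝ) (b : ℝ → ℝ)
    (vs : ℝ → ℝ → ℝ → ℝ) (t x : ℝ) : ℝ :=
  ∫ z in (-1 + β * b x)..(ε * ζ t x), (vs t x z)^3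

section Helpers

open MeasureTheory Set

/-- Derivative under the integral sign, fixed endpoints, smooth integrand. -/
theorem paramDeriv {w : ℝ → ℝ → ℝ} (hw : ContDiff ℝ (⊤ : ℕ∞) fun p : ℝ × ℝ => w p.1 p.2)
    (a b s₀ : ℝ) :
    HasDerivAt (fun s => ∫ z in a..b, w s z)
      (∫ z in a..b, deriv (fun s => w s z) s₀) s₀ := by
  have hWc : Continuous fun p : ℝ × ℝ => w p.1 p.2 := hw.continuous
  have hWd : Differentiable ℝ fun p : ℝ × ℝ => w p.1 p.2 := hw.differentiable (by simp)
  set D : ℝ → ℝ → ℝ :=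
    fun s z => fderiv ℝ (fun p : ℝ × ℝ => w p.1 p.2) (s, z) (1, 0) with hD
  have hDc : Continuous fun p : ℝ × ℝ => D p.1 p.2 := by
    have h1 : Continuous fun p : ℝ × ℝ => fderiv ℝ (fun p : ℝ × ℝ => w p.1 p.2) p :=
      hw.continuous_fderiv (by simp)
    exact h1.clm_apply continuous_const
  have hderiv : ∀ s z, HasDerivAt (fun s' => w s' z) (D s z) s := by
    intro s z
    have h1 : HasDerivAt (fun s' : ℝ => ((s', z) : ℝ × ℝ)) ((1 : ℝ), (0 : ℝ)) s :=
      (hasDerivAt_id s).prodMk (hasDerivAt_const s z)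
    exact ((hWd (s, z)).hasFDerivAt.comp_hasDerivAt s h1)
  obtain ⟨C, hC⟩ := ((isCompact_Icc (a := s₀ - 1) (b := s₀ + 1)).prod
    (isCompact_uIcc (a := a) (b := b))).exists_bound_of_continuousOn hDc.continuousOn
  have key := intervalIntegral.hasDerivAt_integral_of_dominated_loc_of_deriv_le
      (F := fun s z => w s z) (F' := D) (bound := fun _ => C) (μ := volume)
      (a := a) (b := b) (x₀ := s₀) (Metric.ball_mem_nhds s₀ zero_lt_one)
      (Filter.Eventually.of_forall fun s =>
        (hWc.comp (Continuous.prodMk_right s)).aestronglyMeasurable)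
      ((hWc.comp (Continuous.prodMk_right s₀)).intervalIntegrable _ _)
      ((hDc.comp (Continuous.prodMk_right s₀)).aestronglyMeasurable)
      (Filter.Eventually.of_forall fun z hz s hs => by
        refine hC (s, z) ⟨?_, uIoc_subset_uIcc hz⟩
        have : s ∈ Metric.closedBall s₀ 1 := Metric.ball_subset_closedBall hs
        rwa [Real.closedBall_eq_Icc] at this)
      (intervalIntegrable_const)
      (Filter.Eventually.of_forall fun z _ s _ => hderiv s z)
  have hcongr : (∫ z in a..b, deriv (fun s => w s z) s₀) = ∫ z in a..b, D s₀ z :=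
    intervalIntegral.integral_congr fun z _ => (hderiv s₀ z).deriv
  rw [hcongr]
  exact key.2

/-- Joint differentiability of the moving-endpoint degenerate integral. -/
theorem movingEnd {w : ℝ → ℝ → ℝ} (hw : ContDiff ℝ (⊤ : ℕ∞) fun p : ℝ × ℝ => w p.1 p.2)
    (t₀ y₀ : ℝ) :
    HasFDerivAt (fun p : ℝ × ℝ => ∫ z in y₀..p.2, w p.1 z)
      (w t₀ y₀ • (ContinuousLinearMap.snd ℝ ℝ ℝ)) (t₀, y₀) := by
  have hWc : Continuous fun p : ℝ × ℝ => w p.1 p.2 := hw.continuous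
  rw [hasFDerivAt_iff_isLittleO_nhds_zero]
  rw [Asymptotics.isLittleO_iff]
  intro c hc
  have hcont := hWc.continuousAt (x := (t₀, y₀))
  rw [Metric.continuousAt_iff] at hcont
  obtain ⟨δ, hδpos, hball⟩ := hcont c hc
  filter_upwards [Metric.ball_mem_nhds (0 : ℝ × ℝ) hδpos] with p hp
  have hpδ : ‖p‖ < δ := by simpa [Metric.mem_ball] using hp
  have hp1 : |p.1| ≤ ‖p‖ := le_max_left _ _
  have hp2 : |p.2| ≤ ‖p‖ := le_max_right _ _
  have hint1 : IntervalIntegrable (fun z => w (t₀ + p.1) z) volume y₀ (y₀ + p.2) :=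
    (hWc.comp (Continuous.prodMk_right _)).intervalIntegrable _ _
  have hkey : (fun q : ℝ × ℝ => ∫ z in y₀..(t₀, y₀).2 + q.2, w ((t₀, y₀).1 + q.1) z) p
      - (∫ z in y₀..(t₀, y₀).2, w (t₀, y₀).1 z)
      - (w t₀ y₀ • (ContinuousLinearMap.snd ℝ ℝ ℝ)) p
      = ∫ z in y₀..(y₀ + p.2), (w (t₀ + p.1) z - w t₀ y₀) := by
    simp only [ContinuousLinearMap.smul_apply, ContinuousLinearMap.coe_snd',
      intervalIntegral.integral_same, smul_eq_mul]
    rw [intervalIntegral.integral_sub hint1 intervalIntegrable_const,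
      intervalIntegral.integral_const]
    simp [smul_eq_mul]
    ring
  calc ‖(fun q : ℝ × ℝ => ∫ z in y₀..(t₀, y₀).2 + q.2, w ((t₀, y₀).1 + q.1) z) p
      - (∫ z in y₀..(t₀, y₀).2, w (t₀, y₀).1 z)
      - (w t₀ y₀ • (ContinuousLinearMap.snd ℝ ℝ ℝ)) p‖
      = ‖∫ z in y₀..(y₀ + p.2), (w (t₀ + p.1) z - w t₀ y₀)‖ := by rw [hkey]
    _ ≤ c * |y₀ + p.2 - y₀| := by
        apply intervalIntegral.norm_integral_le_of_norm_le_const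
        intro z hz
        have hz' : |z - y₀| ≤ |y₀ + p.2 - y₀| := by
          rcases Set.mem_uIcc.mp (uIoc_subset_uIcc hz) with ⟨h1, h2⟩ | ⟨h1, h2⟩ <;>
          · rw [abs_le]
            constructor <;>
              [nlinarith [le_abs_self (y₀ + p.2 - y₀), neg_abs_le (y₀ + p.2 - y₀)];
               nlinarith [le_abs_self (y₀ + p.2 - y₀), neg_abs_le (y₀ + p.2 - y₀)]]
        have hd : dist ((t₀ + p.1, z) : ℝ × ℝ) (t₀, y₀) < δ := by
          rw [Prod.dist_eq]
          apply max_lt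
          · rw [Real.dist_eq]
            simp only [add_sub_cancel_left]
            exact lt_of_le_of_lt hp1 hpδ
          · rw [Real.dist_eq]
            have habs : |y₀ + p.2 - y₀| = |p.2| := by ring_nf
            calc |z - y₀| ≤ |y₀ + p.2 - y₀| := hz'
              _ = |p.2| := habs
              _ ≤ ‖p‖ := hp2
              _ < δ := hpδ
        have := hball hd
        rw [Real.dist_eq] at this
        exact le_of_lt this
    _ ≤ c * ‖p‖ := by
        have habs : |y₀ + p.2 - y₀| = |p.2| := by ring_nf
        rw [habs]
        exact mul_le_mul_of_nonneg_left hp2 (le_of_lt hc)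

/-- Leibniz rule: derivative of an integral with a fixed lower endpoint and a moving
upper endpoint, smooth integrand. -/
theorem leibniz {w : ℝ → ℝ → ℝ} (hw : ContDiff ℝ (⊤ : ℕ∞) fun p : ℝ × ℝ => w p.1 p.2)
    {c : ℝ → ℝ} {c' : ℝ} (a t₀ : ℝ) (hc : HasDerivAt c c' t₀) :
    HasDerivAt (fun t => ∫ z in a..c t, w t z)
      ((∫ z in a..c t₀, deriv (fun s => w s z) t₀) + c' * w t₀ (c t₀)) t₀ := by
  have hint : ∀ (t u v : ℝ), IntervalIntegrable (w t) volume u v := fun t u v =>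
    (hw.continuous.comp (Continuous.prodMk_right t)).intervalIntegrable _ _
  have hsplit : (fun t => ∫ z in a..c t, w t z)
      = fun t => (∫ z in a..c t₀, w t z) + ∫ z in c t₀..c t, w t z := by
    funext t
    exact (intervalIntegral.integral_add_adjacent_intervals (hint t a (c t₀))
      (hint t (c t₀) (c t))).symm
  rw [hsplit]
  have h1 : HasDerivAt (fun t => ∫ z in a..c t₀, w t z)
      (∫ z in a..c t₀, deriv (fun s => w s z) t₀) t₀ := paramDeriv hw _ _ _
  have h2 : HasDerivAt (fun t => ∫ z in c t₀..c t, w t z) (c' * w t₀ (c t₀)) t₀ := by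
    have hΦ := movingEnd hw t₀ (c t₀)
    have hcurve : HasDerivAt (fun t => ((t, c t) : ℝ × ℝ)) ((1 : ℝ), c') t₀ :=
      (hasDerivAt_id t₀).prodMk hc
    have hcomp := hΦ.comp_hasDerivAt t₀ hcurve
    simpa [mul_comm, Function.comp_def] using hcomp
  exact h1.add h2

/-- Continuity in `z` of the three partial derivatives of a smooth function of
three variables. -/
theorem cont_partials {f : ℝ → ℝ → ℝ → ℝ}
    (hf : ContDiff ℝ (⊤ : ℕ∞) fun p : ℝ × ℝ × ℝ => f p.1 p.2.1 p.2.2) (t x : ℝ) :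
    Continuous (fun z => st f t x z) ∧ Continuous (fun z => sx f t x z) ∧
      Continuous (fun z => sz f t x z) := by
  have hFd := hf.differentiable (by simp)
  have hfc := hf.continuous_fderiv (by simp)
  have curve : Continuous fun z : ℝ => ((t, x, z) : ℝ × ℝ × ℝ) :=
    continuous_const.prodMk (continuous_const.prodMk continuous_id)
  refine ⟨?_, ?_, ?_⟩
  · have hder : ∀ z, HasDerivAt (fun s => f s x z)
        (fderiv ℝ (fun p : ℝ × ℝ × ℝ => f p.1 p.2.1 p.2.2) (t, x, z) (1, 0, 0)) t := fun z =>
      (hFd _).hasFDerivAt.comp_hasDerivAt t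
        ((hasDerivAt_id t).prodMk ((hasDerivAt_const t x).prodMk (hasDerivAt_const t z)))
    have heq : (fun z => st f t x z)
        = fun z => fderiv ℝ (fun p : ℝ × ℝ × ℝ => f p.1 p.2.1 p.2.2) (t, x, z) (1, 0, 0) :=
      funext fun z => ((hder z).deriv)
    rw [heq]
    exact (hfc.comp curve).clm_apply continuous_const
  · have hder : ∀ z, HasDerivAt (fun u => f t u z)
        (fderiv ℝ (fun p : ℝ × ℝ × ℝ => f p.1 p.2.1 p.2.2) (t, x, z) (0, 1, 0)) x := fun z =>
      (hFd _).hasFDerivAt.comp_hasDerivAt x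
        ((hasDerivAt_const x t).prodMk ((hasDerivAt_id x).prodMk (hasDerivAt_const x z)))
    have heq : (fun z => sx f t x z)
        = fun z => fderiv ℝ (fun p : ℝ × ℝ × ℝ => f p.1 p.2.1 p.2.2) (t, x, z) (0, 1, 0) :=
      funext fun z => ((hder z).deriv)
    rw [heq]
    exact (hfc.comp curve).clm_apply continuous_const
  · have hder : ∀ z, HasDerivAt (fun u => f t x u)
        (fderiv ℝ (fun p : ℝ × ℝ × ℝ => f p.1 p.2.1 p.2.2) (t, x, z) (0, 0, 1)) z := fun z =>
      (hFd _).hasFDerivAt.comp_hasDerivAt z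
        ((hasDerivAt_const z t).prodMk ((hasDerivAt_const z x).prodMk (hasDerivAt_id z)))
    have heq : (fun z => sz f t x z)
        = fun z => fderiv ℝ (fun p : ℝ × ℝ × ℝ => f p.1 p.2.1 p.2.2) (t, x, z) (0, 0, 1) :=
      funext fun z => ((hder z).deriv)
    rw [heq]
    exact (hfc.comp curve).clm_apply continuous_const

end Helpers

/-- the exact evolution equation ∂_t F + εv̄∂_xF + 4εF∂_xv̄ = 0. -/
theorem F_evolution
    (ε β : ℝ) (hε : 0 < ε) (hβ : 0 < β)
    (ζ vbar : ℝ → ℝ → ℝ) (b : ℝ → ℝ) (vs : ℝ → ℝ → ℝ → ℝ)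
    (hζ : Smooth2 ζ) (hvbar : Smooth2 vbar) (hb : Smooth1 b) (hvs : Smooth3 vs)
    (hpos : ∀ t x, 0 < 1 + ε * ζ t x - β * b x)
    -- mass conservation
    (hmass : ∀ t x,
      rt ζ t x + rx (fun t' x' => (1 + ε * ζ t' x' - β * b x') * vbar t' x') t x = 0)
    -- transport equation for v* in the water column
    (heq : ∀ t x z, -1 + β * b x ≤ z → z ≤ ε * ζ t x →
      st vs t x z + ε * vbar t x * sx vs t x z + ε * vs t x z * rx vbar t x
        - ε * rx (fun t' x' => (1 + z - β * b x') * vbar t' x') t x * sz vs t x z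
      = 0) :
    ∀ t x,
      rt (Fn ε β ζ b vs) t x
        + ε * vbar t x * rx (Fn ε β ζ b vs) t x
        + 4 * ε * Fn ε β ζ b vs t x * rx vbar t x = 0 := by
  intro t x
  -- basic smoothness facts
  have DV : Differentiable ℝ fun p : ℝ × ℝ × ℝ => vs p.1 p.2.1 p.2.2 := hvs.differentiable (by simp)
  have Dζ : Differentiable ℝ fun p : ℝ × ℝ => ζ p.1 p.2 := hζ.differentiable (by simp)
  have Dvb : Differentiable ℝ fun p : ℝ × ℝ => vbar p.1 p.2 := hvbar.differentiable (by simp)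
  have hζt : HasDerivAt (fun s => ζ s x) (rt ζ t x) t :=
    ((Dζ.comp (differentiable_id.prodMk (differentiable_const x))) t).hasDerivAt
  have hζx : HasDerivAt (fun u => ζ t u) (rx ζ t x) x :=
    ((Dζ.comp ((differentiable_const t).prodMk differentiable_id)) x).hasDerivAt
  have hvbx : HasDerivAt (fun u => vbar t u) (rx vbar t x) x :=
    ((Dvb.comp ((differentiable_const t).prodMk differentiable_id)) x).hasDerivAt
  have hbx : HasDerivAt b (deriv b x) x := ((hb.differentiable (by simp)) x).hasDerivAt
  have hvt : ∀ z, HasDerivAt (fun s => vs s x z) (st vs t x z) t := fun z =>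
    ((DV.comp (differentiable_id.prodMk
      ((differentiable_const x).prodMk (differentiable_const z)))) t).hasDerivAt
  have hvx : ∀ z, HasDerivAt (fun u => vs t u z) (sx vs t x z) x := fun z =>
    ((DV.comp ((differentiable_const t).prodMk
      (differentiable_id.prodMk (differentiable_const z)))) x).hasDerivAt
  have hvz : ∀ z, HasDerivAt (fun u => vs t x u) (sz vs t x z) z := fun z =>
    ((DV.comp ((differentiable_const t).prodMk
      ((differentiable_const x).prodMk differentiable_id))) z).hasDerivAt
  have hcube_t : ∀ z, HasDerivAt (fun s => (vs s x z)^3)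
      (3 * (vs t x z)^2 * st vs t x z) t := fun z => by simpa using (hvt z).fun_pow 3
  have hcube_x : ∀ z, HasDerivAt (fun u => (vs t u z)^3)
      (3 * (vs t x z)^2 * sx vs t x z) x := fun z => by simpa using (hvx z).fun_pow 3
  have hcube_z : ∀ z, HasDerivAt (fun u => (vs t x u)^3)
      (3 * (vs t x z)^2 * sz vs t x z) z := fun z => by simpa using (hvz z).fun_pow 3
  obtain ⟨cst, csx, csz⟩ := cont_partials hvs t x
  have cv : Continuous fun z => vs t x z := hvs.continuous.comp
    (continuous_const.prodMk (continuous_const.prodMk continuous_id))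
  have W3t : ContDiff ℝ (⊤ : ℕ∞) fun p : ℝ × ℝ => (vs p.1 x p.2)^3 :=
    (hvs.comp (contDiff_fst.prodMk (contDiff_const.prodMk contDiff_snd))).pow 3
  have W3x : ContDiff ℝ (⊤ : ℕ∞) fun p : ℝ × ℝ => (vs t p.1 p.2)^3 :=
    (hvs.comp (contDiff_const.prodMk (contDiff_fst.prodMk contDiff_snd))).pow 3
  have hAC : (-1 + β * b x) ≤ ε * ζ t x := by have := hpos t x; linarith
  -- E1 : time derivative of Fn
  have hLt := leibniz (w := fun s z => (vs s x z)^3) W3t (-1 + β * b x) t (hζt.const_mul ε)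
  have e1 : rt (Fn ε β ζ b vs) t x
      = (∫ z in (-1 + β * b x)..(ε * ζ t x), deriv (fun s => (vs s x z)^3) t)
        + ε * rt ζ t x * (vs t x (ε * ζ t x))^3 := hLt.deriv
  have e1' : (∫ z in (-1 + β * b x)..(ε * ζ t x), deriv (fun s => (vs s x z)^3) t)
      = ∫ z in (-1 + β * b x)..(ε * ζ t x), 3 * (vs t x z)^2 * st vs t x z :=
    intervalIntegral.integral_congr fun z _ => (hcube_t z).deriv
  have E1 : rt (Fn ε β ζ b vs) t x
      = (∫ z in (-1 + β * b x)..(ε * ζ t x), 3 * (vs t x z)^2 * st vs t x z)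
        + ε * rt ζ t x * (vs t x (ε * ζ t x))^3 := by rw [e1, e1']
  -- E2 : space derivative of Fn
  have hintx : ∀ (u a' b' : ℝ), IntervalIntegrable (fun z => (vs t u z)^3) MeasureTheory.volume a' b' :=
    fun u a' b' => (W3x.continuous.comp (Continuous.prodMk_right u)).intervalIntegrable _ _
  have hA' : HasDerivAt (fun u => -1 + β * b u) (β * deriv b x) x :=
    (hbx.const_mul β).const_add (-1)
  have hL1 := leibniz (w := fun u z => (vs t u z)^3) W3x 0 x (hζx.const_mul ε)
  have hL2 := leibniz (w := fun u z => (vs t u z)^3) W3x 0 x hA'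
  have hsp : (fun u => Fn ε β ζ b vs t u)
      = fun u => (∫ z in (0:ℝ)..(ε * ζ t u), (vs t u z)^3)
          - (∫ z in (0:ℝ)..(-1 + β * b u), (vs t u z)^3) := by
    funext u
    have h1 := intervalIntegral.integral_add_adjacent_intervals
      (hintx u (-1 + β * b u) 0) (hintx u 0 (ε * ζ t u))
    have h2 := intervalIntegral.integral_symm (f := fun z => (vs t u z)^3)
      (μ := MeasureTheory.volume) 0 (-1 + β * b u)
    simp only [Fn]
    linarith
  have e2pre : HasDerivAt (fun u => Fn ε β ζ b vs t u)
      (((∫ z in (0:ℝ)..(ε * ζ t x), deriv (fun u => (vs t u z)^3) x)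
          + ε * rx ζ t x * (vs t x (ε * ζ t x))^3)
        - ((∫ z in (0:ℝ)..(-1 + β * b x), deriv (fun u => (vs t u z)^3) x)
          + β * deriv b x * (vs t x (-1 + β * b x))^3)) x := by
    rw [hsp]; exact hL1.sub hL2
  have e2 : rx (Fn ε β ζ b vs) t x = _ := e2pre.deriv
  have hcx : Continuous fun z => 3 * (vs t x z)^2 * sx vs t x z :=
    (continuous_const.mul (cv.pow 2)).mul csx
  have e2c : ∀ a' : ℝ, (∫ z in (0:ℝ)..a', deriv (fun u => (vs t u z)^3) x)
      = ∫ z in (0:ℝ)..a', 3 * (vs t x z)^2 * sx vs t x z := fun a' =>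
    intervalIntegral.integral_congr fun z _ => (hcube_x z).deriv
  have hrecomb : (∫ z in (0:ℝ)..(ε * ζ t x), 3 * (vs t x z)^2 * sx vs t x z)
      - (∫ z in (0:ℝ)..(-1 + β * b x), 3 * (vs t x z)^2 * sx vs t x z)
      = ∫ z in (-1 + β * b x)..(ε * ζ t x), 3 * (vs t x z)^2 * sx vs t x z := by
    have h1 := intervalIntegral.integral_add_adjacent_intervals (μ := MeasureTheory.volume)
      (hcx.intervalIntegrable (-1 + β * b x) 0) (hcx.intervalIntegrable 0 (ε * ζ t x))
    have h2 := intervalIntegral.integral_symm (f := fun z => 3 * (vs t x z)^2 * sx vs t x z)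
      (μ := MeasureTheory.volume) 0 (-1 + β * b x)
    linarith
  have E2 : rx (Fn ε β ζ b vs) t x
      = (∫ z in (-1 + β * b x)..(ε * ζ t x), 3 * (vs t x z)^2 * sx vs t x z)
        + ε * rx ζ t x * (vs t x (ε * ζ t x))^3
        - β * deriv b x * (vs t x (-1 + β * b x))^3 := by
    rw [e2, e2c, e2c]
    linarith [hrecomb]
  -- explicit form of rx of (1+z-βb)v̄
  have hG : ∀ z : ℝ, rx (fun t' x' => (1 + z - β * b x') * vbar t' x') t x
      = (1 + z - β * b x) * rx vbar t x - β * deriv b x * vbar t x := by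
    intro z
    have hd : HasDerivAt (fun u => (1 + z - β * b u) * vbar t u)
        ((0 - β * deriv b x) * vbar t x + (1 + z - β * b x) * rx vbar t x) x :=
      ((hasDerivAt_const x (1 + z)).sub (hbx.const_mul β)).mul hvbx
    have h : rx (fun t' x' => (1 + z - β * b x') * vbar t' x') t x
        = (0 - β * deriv b x) * vbar t x + (1 + z - β * b x) * rx vbar t x := hd.deriv
    rw [h]; ring
  -- explicit form of mass conservation
  have hdm : HasDerivAt (fun u => (1 + ε * ζ t u - β * b u) * vbar t u)
      (((0 + ε * rx ζ t x) - β * deriv b x) * vbar t x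
        + (1 + ε * ζ t x - β * b x) * rx vbar t x) x :=
    (((hasDerivAt_const x 1).add (hζx.const_mul ε)).sub (hbx.const_mul β)).mul hvbx
  have hmassx : rt ζ t x + ((ε * rx ζ t x - β * deriv b x) * vbar t x
      + (1 + ε * ζ t x - β * b x) * rx vbar t x) = 0 := by
    have h0 := hmass t x
    have h : rx (fun t' x' => (1 + ε * ζ t' x' - β * b x') * vbar t' x') t x
        = ((0 + ε * rx ζ t x) - β * deriv b x) * vbar t x
          + (1 + ε * ζ t x - β * b x) * rx vbar t x := hdm.deriv
    rw [h] at h0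
    linarith
  -- pointwise identity in the water column
  have hE3 : ∀ z ∈ Set.uIcc (-1 + β * b x) (ε * ζ t x),
      3 * (vs t x z)^2 * st vs t x z + ε * vbar t x * (3 * (vs t x z)^2 * sx vs t x z)
      = -(3 * ε * rx vbar t x) * (vs t x z)^3
        + ε * (((1 + z - β * b x) * rx vbar t x - β * deriv b x * vbar t x)
            * (3 * (vs t x z)^2 * sz vs t x z)) := by
    intro z hz
    rw [Set.uIcc_of_le hAC] at hz
    obtain ⟨h1, h2⟩ := hz
    have h := heq t x z h1 h2
    rw [hG z] at h
    linear_combination (3 * (vs t x z)^2) * h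
  -- integrability facts
  have hi1 : IntervalIntegrable (fun z => 3 * (vs t x z)^2 * st vs t x z)
      MeasureTheory.volume (-1 + β * b x) (ε * ζ t x) :=
    ((continuous_const.mul (cv.pow 2)).mul cst).intervalIntegrable _ _
  have hi2 : IntervalIntegrable (fun z => 3 * (vs t x z)^2 * sx vs t x z)
      MeasureTheory.volume (-1 + β * b x) (ε * ζ t x) := hcx.intervalIntegrable _ _
  have hi3 : IntervalIntegrable (fun z => (vs t x z)^3)
      MeasureTheory.volume (-1 + β * b x) (ε * ζ t x) := (cv.pow 3).intervalIntegrable _ _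
  have hGc : Continuous fun z : ℝ =>
      (1 + z - β * b x) * rx vbar t x - β * deriv b x * vbar t x :=
    (((continuous_const.add continuous_id).sub continuous_const).mul continuous_const).sub
      continuous_const
  have hi4 : IntervalIntegrable (fun z =>
      ((1 + z - β * b x) * rx vbar t x - β * deriv b x * vbar t x)
        * (3 * (vs t x z)^2 * sz vs t x z))
      MeasureTheory.volume (-1 + β * b x) (ε * ζ t x) :=
    (hGc.mul ((continuous_const.mul (cv.pow 2)).mul csz)).intervalIntegrable _ _
  -- combine the two integrals
  have hE4 : (∫ z in (-1 + β * b x)..(ε * ζ t x), 3 * (vs t x z)^2 * st vs t x z)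
      + ε * vbar t x * (∫ z in (-1 + β * b x)..(ε * ζ t x), 3 * (vs t x z)^2 * sx vs t x z)
      = -(3 * ε * rx vbar t x) * (∫ z in (-1 + β * b x)..(ε * ζ t x), (vs t x z)^3)
        + ε * (∫ z in (-1 + β * b x)..(ε * ζ t x),
            ((1 + z - β * b x) * rx vbar t x - β * deriv b x * vbar t x)
              * (3 * (vs t x z)^2 * sz vs t x z)) := by
    have step1 : (∫ z in (-1 + β * b x)..(ε * ζ t x),
        (3 * (vs t x z)^2 * st vs t x z
          + ε * vbar t x * (3 * (vs t x z)^2 * sx vs t x z)))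
        = (∫ z in (-1 + β * b x)..(ε * ζ t x), 3 * (vs t x z)^2 * st vs t x z)
          + ε * vbar t x * (∫ z in (-1 + β * b x)..(ε * ζ t x),
              3 * (vs t x z)^2 * sx vs t x z) := by
      rw [intervalIntegral.integral_add hi1 (hi2.const_mul _),
        intervalIntegral.integral_const_mul]
    have step2 : (∫ z in (-1 + β * b x)..(ε * ζ t x),
        (3 * (vs t x z)^2 * st vs t x z
          + ε * vbar t x * (3 * (vs t x z)^2 * sx vs t x z)))
        = ∫ z in (-1 + β * b x)..(ε * ζ t x),
            (-(3 * ε * rx vbar t x) * (vs t x z)^3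
              + ε * (((1 + z - β * b x) * rx vbar t x - β * deriv b x * vbar t x)
                  * (3 * (vs t x z)^2 * sz vs t x z))) :=
      intervalIntegral.integral_congr hE3
    have step3 : (∫ z in (-1 + β * b x)..(ε * ζ t x),
        (-(3 * ε * rx vbar t x) * (vs t x z)^3
          + ε * (((1 + z - β * b x) * rx vbar t x - β * deriv b x * vbar t x)
              * (3 * (vs t x z)^2 * sz vs t x z))))
        = -(3 * ε * rx vbar t x) * (∫ z in (-1 + β * b x)..(ε * ζ t x), (vs t x z)^3)
          + ε * (∫ z in (-1 + β * b x)..(ε * ζ t x),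
              ((1 + z - β * b x) * rx vbar t x - β * deriv b x * vbar t x)
                * (3 * (vs t x z)^2 * sz vs t x z)) := by
      rw [intervalIntegral.integral_add (hi3.const_mul _) (hi4.const_mul _),
        intervalIntegral.integral_const_mul, intervalIntegral.integral_const_mul]
    linarith [step1, step2, step3]
  -- integration by parts
  have hu : ∀ z ∈ Set.uIcc (-1 + β * b x) (ε * ζ t x),
      HasDerivAt (fun z => (1 + z - β * b x) * rx vbar t x - β * deriv b x * vbar t x)
        (rx vbar t x) z := by
    intro z _
    have h := ((((hasDerivAt_id z).const_add 1).sub_const (β * b x)).mul_const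
      (rx vbar t x)).sub_const (β * deriv b x * vbar t x)
    simpa using h
  have hE5 : (∫ z in (-1 + β * b x)..(ε * ζ t x),
        ((1 + z - β * b x) * rx vbar t x - β * deriv b x * vbar t x)
          * (3 * (vs t x z)^2 * sz vs t x z))
      = ((1 + (ε * ζ t x) - β * b x) * rx vbar t x - β * deriv b x * vbar t x)
          * (vs t x (ε * ζ t x))^3
        - ((1 + (-1 + β * b x) - β * b x) * rx vbar t x - β * deriv b x * vbar t x)
          * (vs t x (-1 + β * b x))^3
        - rx vbar t x * (∫ z in (-1 + β * b x)..(ε * ζ t x), (vs t x z)^3) := by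
    have hparts := intervalIntegral.integral_mul_deriv_eq_deriv_mul
      (a := -1 + β * b x) (b := ε * ζ t x)
      (u := fun z => (1 + z - β * b x) * rx vbar t x - β * deriv b x * vbar t x)
      (u' := fun _ => rx vbar t x)
      (v := fun z => (vs t x z)^3)
      (v' := fun z => 3 * (vs t x z)^2 * sz vs t x z)
      hu (fun z _ => hcube_z z) intervalIntegrable_const
      (((continuous_const.mul (cv.pow 2)).mul csz).intervalIntegrable _ _)
    rw [hparts, intervalIntegral.integral_const_mul]
  -- final assembly
  rw [E1, E2]
  simp only [Fn]
  linear_combination hE4 + ε * hE5 + (ε * (vs t x (ε * ζ t x))^3) * hmassx
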